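/- Let N be a positive natural number and let R : (Fin N → ℝ) → ℝ be a function all of whose mixed partial derivatives of order at most one in each variable exist and are continuous on the closed orthant [0,∞)^N. For a subset S of the index set, write ∂_S R for the mixed partial derivative of R taken once with respect to each variable indexed by S. Then for every point X in [0,∞)^N, R(X) equals the sum, over all subsets S of {0,…,N−1} (including the empty set, whose summand is R(0,…,0)), of the integral over μ ∈ [0,∞)^S of ∂_S R evaluated at the point whose i-th coordinate is μ_i for i ∈ S and 0 for i ∉ S, multiplied by the product over i ∈ S of σ(X_i − μ_i). -/

import Mathlib

/-! Peel off one coordinate at a time. For `a ∉ T` and `S ⊆ T`, the fundamental theorem of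
calculus in the `a`-th variable, integrated over the box `∏_{i ∈ S} [0, X i]` and combined with
Fubini, splits the `S`-term with the coordinates in `T` set to `0` into the same term with `a`
also set to `0` plus the `insert a S`-term. Induction on `T` up to the whole index set gives
`R X = ∑_S ∫_{[0, X]^S} ∂_S R (μ, 0) dμ`. Finally the Heaviside factors cut `[0, ∞)^S` down to
the box `[0, X]^S` outside the null set where some `μ i = X i`, so their value at `0` is
irrelevant. -/

open MeasureTheory

/-- The Heaviside step function: `1` for positive arguments, `1/2` at `0`,
and `0` for negative arguments. -/
noncomputable def heaviside (t : ℝ) : ℝ :=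
  if 0 < t then 1 else if t = 0 then 1 / 2 else 0

open Set Function

section UpdateFinset

variable {ι : Type*} [DecidableEq ι]

theorem continuous_updateFinset {π : ι → Type*} [∀ i, TopologicalSpace (π i)]
    (x : ∀ i, π i) (s : Finset ι) : Continuous (updateFinset x s) := by
  refine continuous_pi fun i => ?_
  by_cases hi : i ∈ s
  · simpa [updateFinset, hi] using continuous_apply (⟨i, hi⟩ : s)
  · simpa [updateFinset, hi] using continuous_const

theorem Function.updateFinset_nonneg {α : Type*} [Zero α] [LE α] {x : ι → α} {s : Finset ι}
    {y : s → α} (hx : 0 ≤ x) (hy : 0 ≤ y) : 0 ≤ updateFinset x s y := by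
  intro i
  by_cases hi : i ∈ s
  · simpa [updateFinset, hi] using hy ⟨i, hi⟩
  · simpa [updateFinset, hi] using hx i

theorem Function.updateFinset_update_of_notMem {π : ι → Type*} {x : ∀ i, π i} {s : Finset ι}
    {y : ∀ i : s, π i} {a : ι} (ha : a ∉ s) (c : π a) :
    updateFinset (update x a c) s y = update (updateFinset x s y) a c := by
  ext i
  by_cases hi : i = a
  · subst hi; simp [updateFinset, ha]
  · by_cases his : i ∈ s <;> simp [updateFinset, hi, his]

end UpdateFinset

theorem heaviside_of_pos {t : ℝ} (ht : 0 < t) : heaviside t = 1 := if_pos ht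

theorem heaviside_of_neg {t : ℝ} (ht : t < 0) : heaviside t = 0 := by
  simp [heaviside, ht.not_gt, ht.ne]

theorem prod_heaviside_sub_eq_indicator {κ : Type*} [Fintype κ] {x y : κ → ℝ}
    (hxy : ∀ i, y i ≠ x i) : ∏ i, heaviside (x i - y i) = (Iic x).indicator 1 y := by
  by_cases hle : y ≤ x
  · rw [indicator_of_mem hle]
    exact Finset.prod_eq_one fun i _ => heaviside_of_pos (sub_pos.2 ((hle i).lt_of_ne (hxy i)))
  · rw [indicator_of_notMem hle]
    obtain ⟨i, hi⟩ : ∃ i, x i < y i := by simpa [Pi.le_def] using hle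
    exact Finset.prod_eq_zero (Finset.mem_univ i) (heaviside_of_neg (sub_neg.2 hi))

theorem setIntegral_pi_Ici_mul_prod_heaviside {κ : Type*} [Fintype κ]
    (f : (κ → ℝ) → ℝ) (x : κ → ℝ) :
    ∫ y in univ.pi fun _ => Ici 0, f y * ∏ i, heaviside (x i - y i)
      = ∫ y in univ.pi fun i => Icc 0 (x i), f y := by
  have hoff : ∀ᵐ y : κ → ℝ, ∀ i, y i ≠ x i := by
    refine ae_all_iff.2 fun i => ?_
    simpa [← volume_pi] using Measure.ae_eval_ne (fun _ : κ => (volume : Measure ℝ)) i (x i)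
  calc ∫ y in univ.pi fun _ => Ici 0, f y * ∏ i, heaviside (x i - y i)
      = ∫ y in Ici 0, (Iic x).indicator f y := by
        rw [pi_univ_Ici]
        refine setIntegral_congr_ae measurableSet_Ici (hoff.mono fun y hy _ => ?_)
        rw [prod_heaviside_sub_eq_indicator hy, ← indicator_mul_right]
        simp only [Pi.one_apply, mul_one]
    _ = ∫ y in univ.pi fun i => Icc 0 (x i), f y := by
        rw [setIntegral_indicator measurableSet_Iic, Ici_inter_Iic, pi_univ_Icc]; rfl

theorem MeasurableEquiv.preimage_piFinsetUnion_univ_pi {ι α : Type*} [DecidableEq ι]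
    [MeasurableSpace α] {s t : Finset ι} (hst : Disjoint s t) (A : ι → Set α) :
    piFinsetUnion (fun _ => α) hst ⁻¹' univ.pi (fun i : ↥(s ∪ t) => A i)
      = univ.pi (fun i : s => A i) ×ˢ univ.pi (fun i : t => A i) := by
  ext ⟨y, z⟩
  simp only [mem_preimage, mem_univ_pi, mem_prod, Subtype.forall, Finset.mem_union]
  have left {i} (hi : i ∈ s) := Equiv.piFinsetUnion_left (fun _ => α) hst (f := y) (g := z) hi
    (Finset.mem_union_left t hi)
  have right {i} (hi : i ∈ t) := Equiv.piFinsetUnion_right (fun _ => α) hst (f := y) (g := z) hi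
    (Finset.mem_union_right s hi)
  constructor
  · intro h
    exact ⟨fun i hi => left hi ▸ h i (.inl hi), fun i hi => right hi ▸ h i (.inr hi)⟩
  · rintro ⟨hy, hz⟩ i (hi | hi)
    · exact (left hi).symm ▸ hy i hi
    · exact (right hi).symm ▸ hz i hi

section Fubini

variable {ι α E : Type*} [DecidableEq ι] [MeasureSpace α] [NormedAddCommGroup E] [NormedSpace ℝ E]

theorem setIntegral_univ_pi_union [SigmaFinite (volume : Measure α)] {s t : Finset ι}
    (hst : Disjoint s t) {A : ι → Set α} {F : (ι → α) → E} {x : ι → α}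
    (hF : IntegrableOn (fun z => F (updateFinset x (s ∪ t) z))
      (univ.pi fun i : ↥(s ∪ t) => A i)) :
    ∫ z in univ.pi (fun i : ↥(s ∪ t) => A i), F (updateFinset x (s ∪ t) z)
      = ∫ y in univ.pi (fun i : s => A i), ∫ z in univ.pi (fun i : t => A i),
          F (updateFinset (updateFinset x s y) t z) := by
  set e := MeasurableEquiv.piFinsetUnion (fun _ : ι => α) hst
  have he : MeasurePreserving e := volume_preserving_piFinsetUnion (fun _ : ι => α) hst
  rw [← he.integrableOn_comp_preimage e.measurableEmbedding,
    MeasurableEquiv.preimage_piFinsetUnion_univ_pi, Measure.volume_eq_prod] at hF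
  rw [← he.setIntegral_preimage_emb e.measurableEmbedding,
    MeasurableEquiv.preimage_piFinsetUnion_univ_pi, Measure.volume_eq_prod,
    setIntegral_prod (fun p => F (updateFinset x (s ∪ t) (e p))) hF]
  simp_rw [updateFinset_updateFinset hst]
  rfl

theorem setIntegral_univ_pi_singleton (a : ι) (A : ι → Set α) (G : (ι → α) → E) (x : ι → α) :
    ∫ z in univ.pi (fun i : ↥({a} : Finset ι) => A i), G (updateFinset x {a} z)
      = ∫ t in A a, G (update x a t) := by
  have he := volume_preserving_funUnique (↥({a} : Finset ι)) α
  have hpre : MeasurableEquiv.funUnique _ α ⁻¹' A a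
      = univ.pi (fun i : ↥({a} : Finset ι) => A i) := by
    ext z
    simp [Unique.forall_iff]
  simp_rw [updateFinset_singleton, ← hpre]
  exact he.setIntegral_preimage_emb (MeasurableEquiv.measurableEmbedding _)
    (fun t => G (update x a t)) (A a)

theorem setIntegral_univ_pi_insert [SigmaFinite (volume : Measure α)] {s : Finset ι} {a : ι}
    (ha : a ∉ s) (A : ι → Set α) {F : (ι → α) → E} {x : ι → α}
    (hF : IntegrableOn (fun z => F (updateFinset x (insert a s) z))
      (univ.pi fun i : ↥(insert a s) => A i)) :
    ∫ z in univ.pi (fun i : ↥(insert a s) => A i), F (updateFinset x (insert a s) z)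
      = ∫ y in univ.pi (fun i : s => A i), ∫ t in A a, F (update (updateFinset x s y) a t) := by
  rw [Finset.insert_eq, Finset.union_comm] at hF ⊢
  rw [setIntegral_univ_pi_union (Finset.disjoint_singleton_right.2 ha) hF]
  simp_rw [setIntegral_univ_pi_singleton]

end Fubini

theorem intervalIntegral.integral_eq_sub_of_hasDerivWithinAt_Ici {E : Type*}
    [NormedAddCommGroup E] [NormedSpace ℝ E] [CompleteSpace E] {f f' : ℝ → E} {a b : ℝ}
    (hab : a ≤ b) (hf : ∀ t ∈ Icc a b, HasDerivWithinAt f (f' t) (Ici a) t)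
    (hf' : ContinuousOn f' (Icc a b)) :
    ∫ t in a..b, f' t = f b - f a :=
  integral_eq_sub_of_hasDerivAt_of_le hab
    (fun t ht => (hf t ht).continuousWithinAt.mono Icc_subset_Ici_self)
    (fun t ht => (hf t (Ioo_subset_Icc_self ht)).hasDerivAt (Ici_mem_nhds ht.1))
    (hf'.intervalIntegrable_of_Icc hab)

section MixedPartials

variable {ι : Type*} [DecidableEq ι]

theorem integrableOn_univ_pi_Icc_updateFinset {F : (ι → ℝ) → ℝ} (hF : ContinuousOn F (Ici 0))
    {x : ι → ℝ} (hx : 0 ≤ x) (s : Finset ι) (X : ι → ℝ) :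
    IntegrableOn (fun y => F (updateFinset x s y)) (univ.pi fun i : s => Icc 0 (X i)) :=
  (hF.comp (continuous_updateFinset x s).continuousOn fun _ hy =>
    updateFinset_nonneg hx fun i => (hy i (mem_univ i)).1).integrableOn_compact
    (isCompact_univ_pi fun _ => isCompact_Icc)

/-- `D S` plays the role of the mixed partial `∂_S (D ∅)` on the closed orthant `0 ≤ x`. -/
structure HasMixedPartialsOnOrthant (D : Finset ι → (ι → ℝ) → ℝ) : Prop where
  hasDerivWithinAt : ∀ (S : Finset ι) (i : ι), i ∉ S → ∀ x : ι → ℝ, 0 ≤ x →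
    HasDerivWithinAt (fun t => D S (update x i t)) (D (insert i S) x) (Ici 0) (x i)
  continuousOn : ∀ S, ContinuousOn (D S) (Ici 0)

variable {D : Finset ι → (ι → ℝ) → ℝ}

theorem HasMixedPartialsOnOrthant.sub_update_zero_eq_integral (hD : HasMixedPartialsOnOrthant D)
    {S : Finset ι} {a : ι} (ha : a ∉ S) {w : ι → ℝ} (hw : 0 ≤ w) :
    D S w - D S (update w a 0) = ∫ t in Icc 0 (w a), D (insert a S) (update w a t) := by
  have hwa : 0 ≤ w a := hw a
  have hupdate {t : ℝ} (ht : 0 ≤ t) : 0 ≤ update w a t := le_update_iff.2 ⟨ht, fun j _ => hw j⟩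
  rw [integral_Icc_eq_integral_Ioc, ← intervalIntegral.integral_of_le hwa,
    intervalIntegral.integral_eq_sub_of_hasDerivWithinAt_Ici (f := fun t => D S (update w a t)) hwa,
    update_eq_self]
  · intro t ht
    simpa using hD.hasDerivWithinAt S a ha (update w a t) (hupdate ht.1)
  · have : Continuous (update w a) := continuous_const.update a continuous_id
    exact (hD.continuousOn _).comp this.continuousOn fun t ht => hupdate ht.1

theorem HasMixedPartialsOnOrthant.setIntegral_updateFinset_eq_add
    (hD : HasMixedPartialsOnOrthant D) {S : Finset ι} {a : ι} (ha : a ∉ S) {X Y : ι → ℝ}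
    (hY : 0 ≤ Y) (hYa : Y a = X a) :
    ∫ μ in univ.pi (fun i : S => Icc 0 (X i)), D S (updateFinset Y S μ)
      = (∫ μ in univ.pi (fun i : S => Icc 0 (X i)), D S (updateFinset (update Y a 0) S μ))
        + ∫ ν in univ.pi (fun i : ↥(insert a S) => Icc 0 (X i)),
            D (insert a S) (updateFinset (update Y a 0) (insert a S) ν) := by
  have hY₀ : 0 ≤ update Y a 0 := le_update_iff.2 ⟨le_rfl, fun j _ => hY j⟩
  have hFTC : ∫ μ in univ.pi (fun i : S => Icc 0 (X i)),
      (D S (updateFinset Y S μ) - D S (updateFinset (update Y a 0) S μ))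
      = ∫ μ in univ.pi (fun i : S => Icc 0 (X i)), ∫ t in Icc 0 (X a),
          D (insert a S) (update (updateFinset (update Y a 0) S μ) a t) := by
    refine setIntegral_congr_fun (MeasurableSet.univ_pi fun _ => measurableSet_Icc) fun μ hμ => ?_
    have hw : 0 ≤ updateFinset Y S μ := updateFinset_nonneg hY fun i => (hμ i (mem_univ i)).1
    have hwa : updateFinset Y S μ a = X a := by simp [updateFinset, ha, hYa]
    simp only [updateFinset_update_of_notMem ha, update_idem]
    rw [hD.sub_update_zero_eq_integral ha hw, hwa]
  rw [integral_sub (integrableOn_univ_pi_Icc_updateFinset (hD.continuousOn S) hY S X)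
    (integrableOn_univ_pi_Icc_updateFinset (hD.continuousOn S) hY₀ S X)] at hFTC
  have hint :=
    integrableOn_univ_pi_Icc_updateFinset (hD.continuousOn (insert a S)) hY₀ (insert a S) X
  rw [setIntegral_univ_pi_insert ha (fun i => Icc 0 (X i)) hint, ← hFTC, add_sub_cancel]

theorem HasMixedPartialsOnOrthant.eq_sum_powerset (hD : HasMixedPartialsOnOrthant D)
    (T : Finset ι) {X : ι → ℝ} (hX : 0 ≤ X) :
    D ∅ X = ∑ S ∈ T.powerset, ∫ μ in univ.pi (fun i : S => Icc 0 (X i)),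
      D S (updateFinset (T.piecewise 0 X) S μ) := by
  induction T using Finset.induction_on with
  | empty => simp [Measure.real]
  | insert a T ha ih =>
    rw [Finset.sum_powerset_insert ha, ← Finset.sum_add_distrib, ih]
    refine Finset.sum_congr rfl fun S hS => ?_
    rw [Finset.piecewise_insert, Pi.zero_apply]
    exact hD.setIntegral_updateFinset_eq_add (fun h => ha (Finset.mem_powerset.1 hS h))
      (fun i => T.piecewise_cases (0 : ι → ℝ) X (fun t : ℝ => 0 ≤ t) le_rfl (hX i))
      (T.piecewise_eq_of_notMem _ _ ha)

end MixedPartials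

theorem heaviside_decomposition_general (N : ℕ)
    (R : (Fin N → ℝ) → ℝ)
    (D : Finset (Fin N) → (Fin N → ℝ) → ℝ)
    (hD0 : D ∅ = R)
    (hderiv : ∀ (S : Finset (Fin N)) (i : Fin N), i ∉ S →
      ∀ x : Fin N → ℝ, (∀ j, 0 ≤ x j) →
        HasDerivWithinAt (fun t => D S (Function.update x i t))
          (D (insert i S) x) (Set.Ici 0) (x i))
    (hcont : ∀ S : Finset (Fin N),
      ContinuousOn (D S) {x : Fin N → ℝ | ∀ j, 0 ≤ x j}) :
    ∀ X : Fin N → ℝ, (∀ j, 0 ≤ X j) →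
      R X = ∑ S : Finset (Fin N),
        ∫ μ : ↥S → ℝ in Set.univ.pi (fun _ => Set.Ici (0 : ℝ)),
          D S (fun i => if h : i ∈ S then μ ⟨i, h⟩ else 0) *
            ∏ i : S, heaviside (X i - μ i) := by
  intro X hX
  have hD : HasMixedPartialsOnOrthant D := ⟨hderiv, hcont⟩
  rw [← hD0, hD.eq_sum_powerset Finset.univ hX, Finset.powerset_univ, Finset.piecewise_univ]
  refine Finset.sum_congr rfl fun S _ => ?_
  exact (setIntegral_pi_Ici_mul_prod_heaviside _ (S.restrict X)).symm

/-- Main theorem of the paper (Heaviside form).  Let `R : (Fin N → ℝ) → ℝ`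
(`N > 0`) have all mixed partial derivatives of order at most one in each
variable, existing and continuous on the closed orthant `[0,∞)^N`; the family
`D S` records the mixed partial `∂_S R` (so `D ∅ = R`, and for `i ∉ S`,
`D (insert i S)` is the partial derivative of `D S` in the `i`-th variable).
Then for every `X` in the orthant, `R X` is the sum over all subsets
`S ⊆ {0,…,N−1}` of the integral over `μ ∈ [0,∞)^S` of `∂_S R`, evaluated at
the point with `i`-th coordinate `μ i` for `i ∈ S` and `0` otherwise, times
`∏_{i ∈ S} σ(Xᵢ − μᵢ)`.  (The `S = ∅` summand is `R(0,…,0)`.) -/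
theorem heaviside_decomposition (N : ℕ) (hN : 0 < N)
    (R : (Fin N → ℝ) → ℝ)
    (D : Finset (Fin N) → (Fin N → ℝ) → ℝ)
    (hD0 : D ∅ = R)
    (hderiv : ∀ (S : Finset (Fin N)) (i : Fin N), i ∉ S →
      ∀ x : Fin N → ℝ, (∀ j, 0 ≤ x j) →
        HasDerivWithinAt (fun t => D S (Function.update x i t))
          (D (insert i S) x) (Set.Ici 0) (x i))
    (hcont : ∀ S : Finset (Fin N),
      ContinuousOn (D S) {x : Fin N → ℝ | ∀ j, 0 ≤ x j}) :
    ∀ X : Fin N → ℝ, (∀ j, 0 ≤ X j) →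
      R X = ∑ S : Finset (Fin N),
        ∫ μ : ↥S → ℝ in Set.univ.pi (fun _ => Set.Ici (0 : ℝ)),
          D S (fun i => if h : i ∈ S then μ ⟨i, h⟩ else 0) *
            ∏ i : S, heaviside (X i - μ i) :=
  heaviside_decomposition_general N R D hD0 hderiv hcont
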